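/- Let R = ℂ[[t]] and let b₁,…,b₈ ∈ R with ∑ᵢ bᵢ = 0, such that t ∤ bᵢ+bᵢ₊₁ for i = 1,3,5,7, and t ∣ bᵢ+bᵢ₊₁+bᵢ₊₂+bᵢ₊₃ for i = 1,3,5,7 (indices cyclic mod 8). Then setting c = t(b₁+b₂)⁻¹, the matrix [[1,0],[−c,0]] is a nontrivial idempotent satisfying t ∣ −c, t ∣ (0−1)(b₁+b₂) − (b₁+b₂)²(−c/t), t ∣ (0−1)(b₁+b₂+b₃+b₄) − (b₁+b₂+b₃+b₄)²(−c/t), and t ∣ (0−1)(b₁+⋯+b₆) − (b₁+⋯+b₆)²(−c/t). -/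

import Mathlib

open PowerSeries Matrix

abbrev R := PowerSeries ℂ

/-!
Since `X ∤ b₁ + b₂`, `u := b₁ + b₂` is a unit, and with `c' = -u⁻¹` each of the three
expressions `-s + s² u⁻¹` equals `u⁻¹ s (s - u)`. It is divisible by `X` as soon as
`s ≡ 0` or `s ≡ u` modulo `X`: here `b₁ + ⋯ + b₄ ≡ 0` and `b₁ + ⋯ + b₆ ≡ b₁ + b₂`.
-/

section Projection

variable {A : Type*} [Ring A]

theorem isIdempotentElem_fin_two_one_zero (x : A) :
    IsIdempotentElem (!![1, 0; x, 0] : Matrix (Fin 2) (Fin 2) A) := by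
  ext i j
  fin_cases i <;> fin_cases j <;> simp [Matrix.mul_apply, Fin.sum_univ_two]

variable [Nontrivial A]

theorem fin_two_one_zero_ne_zero (x : A) : (!![1, 0; x, 0] : Matrix (Fin 2) (Fin 2) A) ≠ 0 :=
  fun h ↦ one_ne_zero (congrFun (congrFun h 0) 0)

theorem fin_two_one_zero_ne_one (x : A) : (!![1, 0; x, 0] : Matrix (Fin 2) (Fin 2) A) ≠ 1 :=
  fun h ↦ zero_ne_one (congrFun (congrFun h 1) 1)

end Projection

theorem dvd_neg_sub_sq_mul_neg_inverse {A : Type*} [CommRing A] {t s u : A} (hu : IsUnit u)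
    (h : t ∣ s * (s - u)) : t ∣ (0 - 1) * s - s ^ 2 * -Ring.inverse u := by
  have huv : u * Ring.inverse u = 1 := Ring.mul_inverse_cancel u hu
  have hfactor : (0 - 1) * s - s ^ 2 * -Ring.inverse u = Ring.inverse u * (s * (s - u)) := by
    linear_combination s * huv
  rw [hfactor]
  exact h.mul_left _

theorem PowerSeries.isUnit_of_not_X_dvd {k : Type*} [Field k] {φ : k⟦X⟧} (h : ¬ X ∣ φ) :
    IsUnit φ :=
  isUnit_iff_constantCoeff.mpr (Ne.isUnit (X_dvd_iff.not.mp h))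

theorem stmt_13_general (b₁ b₂ b₃ b₄ b₅ b₆ : R)
    (h12 : ¬ X ∣ b₁ + b₂)
    (h1234 : X ∣ b₁ + b₂ + b₃ + b₄)
    (h3456 : X ∣ b₃ + b₄ + b₅ + b₆) :
    ∀ c : R, c = X * Ring.inverse (b₁ + b₂) →
      ((!![1, 0; -c, 0] : Matrix (Fin 2) (Fin 2) R) * !![1, 0; -c, 0] = !![1, 0; -c, 0] ∧
        (!![1, 0; -c, 0] : Matrix (Fin 2) (Fin 2) R) ≠ 0 ∧
        (!![1, 0; -c, 0] : Matrix (Fin 2) (Fin 2) R) ≠ 1 ∧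
        X ∣ (-c) ∧
        ∃ c' : R, X * c' = -c ∧
          X ∣ (0 - 1) * (b₁ + b₂) - (b₁ + b₂) ^ 2 * c' ∧
          X ∣ (0 - 1) * (b₁ + b₂ + b₃ + b₄) - (b₁ + b₂ + b₃ + b₄) ^ 2 * c' ∧
          X ∣ (0 - 1) * (b₁ + b₂ + b₃ + b₄ + b₅ + b₆) -
            (b₁ + b₂ + b₃ + b₄ + b₅ + b₆) ^ 2 * c') := by
  rintro c rfl
  have hu : IsUnit (b₁ + b₂) := isUnit_of_not_X_dvd h12
  have hX_mul_neg : X * -Ring.inverse (b₁ + b₂) = -(X * Ring.inverse (b₁ + b₂)) := mul_neg _ _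
  have hsub : b₁ + b₂ + b₃ + b₄ + b₅ + b₆ - (b₁ + b₂) = b₃ + b₄ + b₅ + b₆ := by ring
  refine ⟨isIdempotentElem_fin_two_one_zero _, fin_two_one_zero_ne_zero _,
    fin_two_one_zero_ne_one _, ⟨_, hX_mul_neg.symm⟩, _, hX_mul_neg, ?_, ?_, ?_⟩
  · exact dvd_neg_sub_sq_mul_neg_inverse hu (by simp)
  · exact dvd_neg_sub_sq_mul_neg_inverse hu (h1234.mul_right _)
  · exact dvd_neg_sub_sq_mul_neg_inverse hu (by rw [hsub]; exact h3456.mul_left _)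

theorem stmt_13 (b₁ b₂ b₃ b₄ b₅ b₆ b₇ b₈ : R)
    (hsum : b₁ + b₂ + b₃ + b₄ + b₅ + b₆ + b₇ + b₈ = 0)
    (h12 : ¬ X ∣ b₁ + b₂) (h34 : ¬ X ∣ b₃ + b₄)
    (h56 : ¬ X ∣ b₅ + b₆) (h78 : ¬ X ∣ b₇ + b₈)
    (h1234 : X ∣ b₁ + b₂ + b₃ + b₄)
    (h3456 : X ∣ b₃ + b₄ + b₅ + b₆)
    (h5678 : X ∣ b₅ + b₆ + b₇ + b₈)
    (h7812 : X ∣ b₇ + b₈ + b₁ + b₂) :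
    ∀ c : R, c = X * Ring.inverse (b₁ + b₂) →
      ((!![1, 0; -c, 0] : Matrix (Fin 2) (Fin 2) R) * !![1, 0; -c, 0] = !![1, 0; -c, 0] ∧
        (!![1, 0; -c, 0] : Matrix (Fin 2) (Fin 2) R) ≠ 0 ∧
        (!![1, 0; -c, 0] : Matrix (Fin 2) (Fin 2) R) ≠ 1 ∧
        X ∣ (-c) ∧
        ∃ c' : R, X * c' = -c ∧
          X ∣ (0 - 1) * (b₁ + b₂) - (b₁ + b₂) ^ 2 * c' ∧
          X ∣ (0 - 1) * (b₁ + b₂ + b₃ + b₄) - (b₁ + b₂ + b₃ + b₄) ^ 2 * c' ∧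
          X ∣ (0 - 1) * (b₁ + b₂ + b₃ + b₄ + b₅ + b₆) -
            (b₁ + b₂ + b₃ + b₄ + b₅ + b₆) ^ 2 * c') :=
  stmt_13_general b₁ b₂ b₃ b₄ b₅ b₆ h12 h1234 h3456
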